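/- arXiv:1706.03636 — 7 statements merged into one kernel-verified Lean document; each statement's English description precedes it below -/
import Mathlib

section
/- Let g be a rational function over ℂ satisfying g(z)g(1/z) = 1. Then g(z) = ± z^l · p(z)/p̃(z), where l ∈ ℤ, p(z) ∈ ℂ[z] is a polynomial with p(0) ≠ 0, and p̃(z) = z^n p(1/z) with n = deg p(z). -/
open Polynomial

/-- Substitution `z ↦ 1/z` on rational functions over `ℂ`. -/
noncomputable def invSubst (g : RatFunc ℂ) : RatFunc ℂ :=
  RatFunc.eval (algebraMap ℂ (RatFunc ℂ)) (RatFunc.X)⁻¹ g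

lemma myReflectInvol {R : Type*} [Semiring R] (N : ℕ) (p : R[X]) :
    reflect N (reflect N p) = p := by
  ext n
  rw [coeff_reflect, coeff_reflect, revAt_invol]

lemma myDecomp {R : Type*} [Semiring R] (p : R[X]) :
    p = p.reverse.reverse * Polynomial.X ^ p.natTrailingDegree := by
  conv_lhs => rw [← p.mirror_mirror]
  rw [Polynomial.mirror, Polynomial.mirror, Polynomial.reverse_mul_X_pow,
    show p.reverse * X ^ p.natTrailingDegree = p.mirror from rfl,
    Polynomial.mirror_natTrailingDegree]

lemma myEvalInv (p : Polynomial ℂ) :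
    Polynomial.eval₂ (algebraMap ℂ (RatFunc ℂ)) (RatFunc.X)⁻¹ p * RatFunc.X ^ p.natDegree =
      algebraMap (Polynomial ℂ) (RatFunc ℂ) p.reverse := by
  letI : Invertible (RatFunc.X : RatFunc ℂ) := invertibleOfNonzero RatFunc.X_ne_zero
  have h := Polynomial.eval₂_reflect_mul_pow (algebraMap ℂ (RatFunc ℂ)) RatFunc.X p.natDegree
    p.reverse p.reverse_natDegree_le
  rw [Polynomial.reverse, myReflectInvol, invOf_eq_inv] at h
  rw [h]
  -- now : eval₂ (algebraMap ℂ (RatFunc ℂ)) RatFunc.X p.reverse = algebraMap _ _ p.reverse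
  rw [← Polynomial.aeval_def]
  have : (Polynomial.aeval (RatFunc.X : RatFunc ℂ) : Polynomial ℂ →ₐ[ℂ] RatFunc ℂ) =
      (IsScalarTower.toAlgHom ℂ (Polynomial ℂ) (RatFunc ℂ)) := by
    apply Polynomial.algHom_ext
    simp [RatFunc.algebraMap_X]
  rw [this]
  rfl

theorem ratFunc_form_of_inv_symmetry (g : RatFunc ℂ)
    (hg : g * invSubst g = 1) :
    ∃ (ε : ℂ) (l : ℤ) (p : Polynomial ℂ),
      (ε = 1 ∨ ε = -1) ∧ p.coeff 0 ≠ 0 ∧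
      g = RatFunc.C ε * RatFunc.X ^ l *
            algebraMap (Polynomial ℂ) (RatFunc ℂ) p /
            algebraMap (Polynomial ℂ) (RatFunc ℂ) p.reverse := by
  classical
  have hg0 : g ≠ 0 := by
    intro h; rw [h, zero_mul] at hg; exact one_ne_zero hg.symm
  have hX : (RatFunc.X : RatFunc ℂ) ≠ 0 := RatFunc.X_ne_zero
  have hXp : (Polynomial.X : Polynomial ℂ) ≠ 0 := Polynomial.X_ne_zero
  set n := g.num with hn
  set d := g.denom with hd
  have hn0 : n ≠ 0 := RatFunc.num_ne_zero hg0
  have hd0 : d ≠ 0 := g.denom_ne_zero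
  have hrn0 : n.reverse ≠ 0 := by rwa [Ne, Polynomial.reverse_eq_zero]
  have hrd0 : d.reverse ≠ 0 := by rwa [Ne, Polynomial.reverse_eq_zero]
  have hAn0 : algebraMap (Polynomial ℂ) (RatFunc ℂ) n ≠ 0 := RatFunc.algebraMap_ne_zero hn0
  have hAd0 : algebraMap (Polynomial ℂ) (RatFunc ℂ) d ≠ 0 := RatFunc.algebraMap_ne_zero hd0
  have hArn0 : algebraMap (Polynomial ℂ) (RatFunc ℂ) n.reverse ≠ 0 :=
    RatFunc.algebraMap_ne_zero hrn0
  have hArd0 : algebraMap (Polynomial ℂ) (RatFunc ℂ) d.reverse ≠ 0 :=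
    RatFunc.algebraMap_ne_zero hrd0
  -- rewrite invSubst g
  have e1 : Polynomial.eval₂ (algebraMap ℂ (RatFunc ℂ)) (RatFunc.X)⁻¹ n =
      algebraMap (Polynomial ℂ) (RatFunc ℂ) n.reverse / RatFunc.X ^ n.natDegree := by
    rw [eq_div_iff (pow_ne_zero _ hX)]; exact myEvalInv n
  have e2 : Polynomial.eval₂ (algebraMap ℂ (RatFunc ℂ)) (RatFunc.X)⁻¹ d =
      algebraMap (Polynomial ℂ) (RatFunc ℂ) d.reverse / RatFunc.X ^ d.natDegree := by
    rw [eq_div_iff (pow_ne_zero _ hX)]; exact myEvalInv d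
  have hinv : invSubst g =
      (algebraMap (Polynomial ℂ) (RatFunc ℂ) n.reverse / RatFunc.X ^ n.natDegree) /
      (algebraMap (Polynomial ℂ) (RatFunc ℂ) d.reverse / RatFunc.X ^ d.natDegree) := by
    rw [invSubst, RatFunc.eval, ← hn, ← hd, e1, e2]
  -- main polynomial identity
  have key : n * n.reverse * Polynomial.X ^ d.natDegree =
      d * d.reverse * Polynomial.X ^ n.natDegree := by
    apply RatFunc.algebraMap_injective ℂ
    have h1 := hg
    rw [hinv, ← RatFunc.num_div_denom g, ← hn, ← hd] at h1
    field_simp at h1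
    push_cast [map_mul, map_pow, RatFunc.algebraMap_X]
    linear_combination h1
  -- decompositions
  set s := n.natTrailingDegree with hs
  set t := d.natTrailingDegree with ht
  set q := n.reverse.reverse with hqdef
  set r := d.reverse.reverse with hrdef
  have hnq : n = q * Polynomial.X ^ s := myDecomp n
  have hdr : d = r * Polynomial.X ^ t := myDecomp d
  have hq0 : q.coeff 0 ≠ 0 := by
    rw [hqdef, Polynomial.coeff_zero_reverse, Polynomial.reverse_leadingCoeff]
    exact fun h => hn0 (Polynomial.trailingCoeff_eq_zero.mp h)
  have hr0 : r.coeff 0 ≠ 0 := by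
    rw [hrdef, Polynomial.coeff_zero_reverse, Polynomial.reverse_leadingCoeff]
    exact fun h => hd0 (Polynomial.trailingCoeff_eq_zero.mp h)
  have hq0' : q ≠ 0 := fun h => hq0 (by rw [h, Polynomial.coeff_zero])
  have hr0' : r ≠ 0 := fun h => hr0 (by rw [h, Polynomial.coeff_zero])
  have htq : q.natTrailingDegree = 0 := Polynomial.natTrailingDegree_eq_zero.mpr (Or.inr hq0)
  have htr : r.natTrailingDegree = 0 := Polynomial.natTrailingDegree_eq_zero.mpr (Or.inr hr0)
  have hrevn : n.reverse = q.reverse := by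
    conv_lhs => rw [hnq]
    rw [Polynomial.reverse_mul_X_pow]
  have hrevd : d.reverse = r.reverse := by
    conv_lhs => rw [hdr]
    rw [Polynomial.reverse_mul_X_pow]
  have hrq0 : q.reverse ≠ 0 := by rwa [Ne, Polynomial.reverse_eq_zero]
  have hrr0 : r.reverse ≠ 0 := by rwa [Ne, Polynomial.reverse_eq_zero]
  have hdegn : n.natDegree = q.natDegree + s := by
    rw [hnq, Polynomial.natDegree_mul hq0' (pow_ne_zero _ hXp), Polynomial.natDegree_X_pow]
  have hdegd : d.natDegree = r.natDegree + t := by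
    rw [hdr, Polynomial.natDegree_mul hr0' (pow_ne_zero _ hXp), Polynomial.natDegree_X_pow]
  have hdegrq : n.reverse.natDegree = q.natDegree := by
    rw [hrevn, Polynomial.reverse_natDegree, htq, Nat.sub_zero]
  have hdegrr : d.reverse.natDegree = r.natDegree := by
    rw [hrevd, Polynomial.reverse_natDegree, htr, Nat.sub_zero]
  -- equal degrees
  have hdqr : q.natDegree = r.natDegree := by
    have hdeg := congrArg Polynomial.natDegree key
    rw [Polynomial.natDegree_mul (mul_ne_zero hn0 hrn0) (pow_ne_zero _ hXp),
      Polynomial.natDegree_mul (mul_ne_zero hd0 hrd0) (pow_ne_zero _ hXp),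
      Polynomial.natDegree_mul hn0 hrn0, Polynomial.natDegree_mul hd0 hrd0,
      Polynomial.natDegree_X_pow, Polynomial.natDegree_X_pow, hdegn, hdegd,
      hdegrq, hdegrr] at hdeg
    omega
  -- cancel the powers of X
  have hqq : q * q.reverse = r * r.reverse := by
    have k := key
    rw [hdegn, hdegd, hdqr, hrevn, hrevd, hnq, hdr] at k
    have e : q * q.reverse * Polynomial.X ^ (s + (r.natDegree + t)) =
        r * r.reverse * Polynomial.X ^ (s + (r.natDegree + t)) := by
      linear_combination k
    exact mul_right_cancel₀ (pow_ne_zero _ hXp) e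
  -- coprimality
  have hco : IsCoprime q r :=
    ((g.isCoprime_num_denom).of_isCoprime_of_dvd_left ⟨Polynomial.X ^ s, hnq⟩).of_isCoprime_of_dvd_right
      ⟨Polynomial.X ^ t, hdr⟩
  have hqdvd : q ∣ r.reverse := by
    refine hco.dvd_of_dvd_mul_left ?_
    exact ⟨q.reverse, by rw [← hqq]⟩
  obtain ⟨u, hu⟩ := hqdvd
  have hu0 : u ≠ 0 := by
    intro h; rw [h, mul_zero] at hu; exact hrr0 hu
  have hdu : u.natDegree = 0 := by
    have h := congrArg Polynomial.natDegree hu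
    rw [Polynomial.natDegree_mul hq0' hu0, Polynomial.reverse_natDegree, htr, Nat.sub_zero,
      hdqr] at h
    omega
  set c := u.coeff 0 with hcdef
  have hc : u = Polynomial.C c := Polynomial.eq_C_of_natDegree_eq_zero hdu
  have hc0 : c ≠ 0 := by
    intro h; rw [h, map_zero] at hc; exact hu0 hc
  have hru : r.reverse = q * Polynomial.C c := by rw [hu, hc]
  have hqrev : q.reverse = Polynomial.C c * r := by
    apply mul_left_cancel₀ hq0'
    rw [hqq, hru]; ring
  -- c * c = 1
  have hlcq : q.leadingCoeff ≠ 0 := Polynomial.leadingCoeff_ne_zero.mpr hq0'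
  have hA1 : r.coeff 0 = q.leadingCoeff * c := by
    have h := congrArg Polynomial.leadingCoeff hru
    rw [Polynomial.reverse_leadingCoeff, Polynomial.leadingCoeff_mul,
      Polynomial.leadingCoeff_C, Polynomial.trailingCoeff, htr] at h
    exact h
  have hA2 : q.leadingCoeff = c * r.coeff 0 := by
    have h := congrArg (fun p => Polynomial.coeff p 0) hqrev
    simpa [Polynomial.coeff_zero_reverse, Polynomial.coeff_C_mul] using h
  have hcc : c * c = 1 := by
    have h : q.leadingCoeff * (c * c) = q.leadingCoeff * 1 := by
      rw [hA1] at hA2; linear_combination -hA2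
    exact mul_left_cancel₀ hlcq h
  refine ⟨c, (s : ℤ) - (t : ℤ), q, mul_self_eq_one_iff.mp hcc, hq0, ?_⟩
  have hAn : algebraMap (Polynomial ℂ) (RatFunc ℂ) n =
      algebraMap (Polynomial ℂ) (RatFunc ℂ) q * RatFunc.X ^ s := by
    rw [hnq, map_mul, map_pow, RatFunc.algebraMap_X]
  have hAd : algebraMap (Polynomial ℂ) (RatFunc ℂ) d =
      algebraMap (Polynomial ℂ) (RatFunc ℂ) r * RatFunc.X ^ t := by
    rw [hdr, map_mul, map_pow, RatFunc.algebraMap_X]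
  have hArev : algebraMap (Polynomial ℂ) (RatFunc ℂ) q.reverse =
      RatFunc.C c * algebraMap (Polynomial ℂ) (RatFunc ℂ) r := by
    rw [hqrev, map_mul, RatFunc.algebraMap_C]
  have hCc : (RatFunc.C c : RatFunc ℂ) ≠ 0 := by
    rw [← RatFunc.algebraMap_C]
    exact RatFunc.algebraMap_ne_zero (fun h => hc0 (by
      have := congrArg (fun p => Polynomial.coeff p 0) h
      simpa using this))
  have hAr0 : algebraMap (Polynomial ℂ) (RatFunc ℂ) r ≠ 0 := RatFunc.algebraMap_ne_zero hr0'
  have hAq0 : algebraMap (Polynomial ℂ) (RatFunc ℂ) q ≠ 0 := RatFunc.algebraMap_ne_zero hq0'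
  rw [← RatFunc.num_div_denom g, ← hn, ← hd, hAn, hAd, hArev,
    zpow_sub₀ hX, zpow_natCast, zpow_natCast]
  field_simp
end

section
/- Let g be a rational function with g(z)g(1/z) = 1, written as g(z) = z^l p(z)/q(z) with p, q coprime polynomials, p(0), q(0) ≠ 0, and n = deg p = deg q. Then q(z) = α · z^n p(1/z) for some nonzero complex number α with α² = 1. -/
open Polynomial

lemma reflect_reflect' {R : Type*} [Semiring R] (N : ℕ) (f : R[X]) :
    reflect N (reflect N f) = f := by
  ext i
  rw [coeff_reflect, coeff_reflect, revAt_invol]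

lemma natDegree_reflect_le' {R : Type*} [Semiring R] {N : ℕ} {f : R[X]}
    (hf : f.natDegree ≤ N) : (reflect N f).natDegree ≤ N := by
  apply natDegree_le_iff_coeff_eq_zero.mpr
  intro i hi
  rw [coeff_reflect, revAt_eq_self_of_lt hi]
  exact coeff_eq_zero_of_natDegree_lt (lt_of_le_of_lt hf hi)

lemma eval₂_X_algebraMap (f : Polynomial ℂ) :
    f.eval₂ (algebraMap ℂ (RatFunc ℂ)) RatFunc.X = algebraMap _ _ f := by
  rw [← Polynomial.aeval_def, ← RatFunc.algebraMap_X, Polynomial.aeval_algebraMap_apply,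
    Polynomial.aeval_X_left_apply]

lemma Einv_mul_pow (f : Polynomial ℂ) (N : ℕ) (hf : f.natDegree ≤ N) :
    f.eval₂ (algebraMap ℂ (RatFunc ℂ)) (RatFunc.X)⁻¹ * RatFunc.X ^ N
      = algebraMap _ _ (reflect N f) := by
  haveI : Invertible (RatFunc.X : RatFunc ℂ) := invertibleOfNonzero RatFunc.X_ne_zero
  have h := Polynomial.eval₂_reflect_mul_pow (algebraMap ℂ (RatFunc ℂ)) (RatFunc.X : RatFunc ℂ)
    N (reflect N f) (natDegree_reflect_le' hf)
  rw [reflect_reflect', invOf_eq_inv, eval₂_X_algebraMap] at h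
  exact h

lemma Einv_ne_zero {f : Polynomial ℂ} (hf : f ≠ 0) :
    f.eval₂ (algebraMap ℂ (RatFunc ℂ)) (RatFunc.X)⁻¹ ≠ 0 := by
  intro h
  have h2 := Einv_mul_pow f f.natDegree le_rfl
  rw [h, zero_mul] at h2
  exact RatFunc.algebraMap_ne_zero (by simpa [reflect_eq_zero_iff] using hf) h2.symm

lemma invSubst_div (u v : Polynomial ℂ) (hv : v ≠ 0) :
    invSubst (algebraMap (Polynomial ℂ) (RatFunc ℂ) u / algebraMap (Polynomial ℂ) (RatFunc ℂ) v)
      = u.eval₂ (algebraMap ℂ (RatFunc ℂ)) (RatFunc.X)⁻¹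
        / v.eval₂ (algebraMap ℂ (RatFunc ℂ)) (RatFunc.X)⁻¹ := by
  set g : RatFunc ℂ := algebraMap _ _ u / algebraMap _ _ v with hg
  have hAv : algebraMap (Polynomial ℂ) (RatFunc ℂ) v ≠ 0 := RatFunc.algebraMap_ne_zero hv
  have hAd : algebraMap (Polynomial ℂ) (RatFunc ℂ) g.denom ≠ 0 :=
    RatFunc.algebraMap_ne_zero (RatFunc.denom_ne_zero g)
  have h1 : algebraMap (Polynomial ℂ) (RatFunc ℂ) g.num
      / algebraMap (Polynomial ℂ) (RatFunc ℂ) g.denom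
      = algebraMap (Polynomial ℂ) (RatFunc ℂ) u / algebraMap (Polynomial ℂ) (RatFunc ℂ) v := by
    rw [RatFunc.num_div_denom]
  have hcross : g.num * v = u * g.denom := by
    apply RatFunc.algebraMap_injective ℂ
    rw [map_mul, map_mul]
    exact (div_eq_div_iff hAd hAv).mp h1
  have hE : g.num.eval₂ (algebraMap ℂ (RatFunc ℂ)) (RatFunc.X)⁻¹
      * v.eval₂ (algebraMap ℂ (RatFunc ℂ)) (RatFunc.X)⁻¹
      = u.eval₂ (algebraMap ℂ (RatFunc ℂ)) (RatFunc.X)⁻¹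
      * g.denom.eval₂ (algebraMap ℂ (RatFunc ℂ)) (RatFunc.X)⁻¹ := by
    have := congrArg (Polynomial.eval₂ (algebraMap ℂ (RatFunc ℂ)) (RatFunc.X)⁻¹) hcross
    simpa [Polynomial.eval₂_mul] using this
  have hdv : g.denom.eval₂ (algebraMap ℂ (RatFunc ℂ)) (RatFunc.X)⁻¹ ≠ 0 :=
    Einv_ne_zero (RatFunc.denom_ne_zero g)
  have hvv : v.eval₂ (algebraMap ℂ (RatFunc ℂ)) (RatFunc.X)⁻¹ ≠ 0 := Einv_ne_zero hv
  rw [invSubst, RatFunc.eval, div_eq_div_iff hdv hvv]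
  exact hE

theorem denom_eq_scalar_reverse (g : RatFunc ℂ) (l : ℤ) (p q : Polynomial ℂ)
    (hpq : IsCoprime p q) (hp0 : p.coeff 0 ≠ 0) (hq0 : q.coeff 0 ≠ 0)
    (hdeg : p.natDegree = q.natDegree)
    (hgform : g = RatFunc.X ^ l * algebraMap (Polynomial ℂ) (RatFunc ℂ) p /
        algebraMap (Polynomial ℂ) (RatFunc ℂ) q)
    (hg : g * invSubst g = 1) :
    ∃ α : ℂ, α ≠ 0 ∧ α ^ 2 = 1 ∧ q = Polynomial.C α * p.reverse := by
  have hp : p ≠ 0 := fun h => hp0 (by simp [h])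
  have hq : q ≠ 0 := fun h => hq0 (by simp [h])
  -- Step 1: write g = A (X^a * p) / A (X^b * q) for naturals a b
  obtain ⟨a, b, hab⟩ : ∃ a b : ℕ, g = algebraMap (Polynomial ℂ) (RatFunc ℂ) (X ^ a * p) /
      algebraMap (Polynomial ℂ) (RatFunc ℂ) (X ^ b * q) := by
    obtain ⟨m, hm | hm⟩ := l.eq_nat_or_neg
    · exact ⟨m, 0, by simp [hgform, hm, zpow_natCast, ← RatFunc.algebraMap_X, ← map_pow,
        ← map_mul]⟩
    · refine ⟨0, m, ?_⟩
      have hXm : (RatFunc.X : RatFunc ℂ) ^ m ≠ 0 := pow_ne_zero _ RatFunc.X_ne_zero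
      rw [hgform, hm, zpow_neg, zpow_natCast]
      rw [map_mul, map_mul, map_pow, map_pow, RatFunc.algebraMap_X, pow_zero, one_mul]
      field_simp
  -- Step 2: the key polynomial identity
  have hkey : p * p.reverse = q * q.reverse := by
    have hu : (X ^ a * p : Polynomial ℂ) ≠ 0 := mul_ne_zero (pow_ne_zero _ X_ne_zero) hp
    have hv : (X ^ b * q : Polynomial ℂ) ≠ 0 := mul_ne_zero (pow_ne_zero _ X_ne_zero) hq
    rw [hab, invSubst_div _ _ hv, div_mul_div_comm] at hg
    have hAv : algebraMap (Polynomial ℂ) (RatFunc ℂ) (X ^ b * q) ≠ 0 :=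
      RatFunc.algebraMap_ne_zero hv
    have hEv : (X ^ b * q : Polynomial ℂ).eval₂ (algebraMap ℂ (RatFunc ℂ)) (RatFunc.X)⁻¹ ≠ 0 :=
      Einv_ne_zero hv
    have hprod := (div_eq_one_iff_eq (mul_ne_zero hAv hEv)).mp hg
    have hdu : (X ^ a * p : Polynomial ℂ).natDegree ≤ a + b + p.natDegree := by
      rw [natDegree_mul (pow_ne_zero _ X_ne_zero) hp, natDegree_X_pow]
      omega
    have hdv : (X ^ b * q : Polynomial ℂ).natDegree ≤ a + b + p.natDegree := by
      rw [natDegree_mul (pow_ne_zero _ X_ne_zero) hq, natDegree_X_pow, ← hdeg]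
      omega
    have hBig : algebraMap (Polynomial ℂ) (RatFunc ℂ)
          ((X ^ a * p) * reflect (a + b + p.natDegree) (X ^ a * p))
        = algebraMap (Polynomial ℂ) (RatFunc ℂ)
          ((X ^ b * q) * reflect (a + b + p.natDegree) (X ^ b * q)) := by
      rw [map_mul _ (X ^ a * p) (reflect (a + b + p.natDegree) (X ^ a * p)),
        map_mul _ (X ^ b * q) (reflect (a + b + p.natDegree) (X ^ b * q)),
        ← Einv_mul_pow _ _ hdu, ← Einv_mul_pow _ _ hdv, ← mul_assoc, ← mul_assoc, hprod]
    have hPoly := RatFunc.algebraMap_injective ℂ hBig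
    have h5 : reflect (a + b + p.natDegree) (X ^ a * p) = X ^ b * p.reverse := by
      rw [reflect_mul (X ^ a) p (by simp) le_rfl, reflect_monomial,
        revAt_le (Nat.le_add_right a b), Nat.add_sub_cancel_left]
      rfl
    have h6 : reflect (a + b + p.natDegree) (X ^ b * q) = X ^ a * q.reverse := by
      rw [reflect_mul (X ^ b) q (by simp) (le_of_eq hdeg.symm), reflect_monomial,
        revAt_le (Nat.le_add_left b a), Nat.add_sub_cancel, hdeg]
      rfl
    rw [h5, h6] at hPoly
    have h7 : X ^ (a + b) * (p * p.reverse) = X ^ (a + b) * (q * q.reverse) := by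
      rw [pow_add]
      linear_combination hPoly
    exact mul_left_cancel₀ (pow_ne_zero _ X_ne_zero) h7
  -- Step 3: q divides reverse p
  have hrevp : p.reverse ≠ 0 := by simpa using hp
  have hdvd : q ∣ p.reverse :=
    hpq.symm.dvd_of_dvd_mul_left ⟨q.reverse, hkey⟩
  obtain ⟨r, hr⟩ := hdvd
  have hrne : r ≠ 0 := by
    rintro rfl
    rw [mul_zero] at hr
    exact hrevp hr
  have hrdeg : r.natDegree = 0 := by
    have h1 : p.reverse.natDegree ≤ p.natDegree := reverse_natDegree_le p
    have h2 : p.reverse.natDegree = q.natDegree + r.natDegree := by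
      rw [hr, natDegree_mul hq hrne]
    omega
  obtain ⟨c, hc⟩ := Polynomial.natDegree_eq_zero.mp hrdeg
  have hcne : c ≠ 0 := by
    rintro rfl
    rw [← hc, map_zero, mul_zero] at hr
    exact hrevp hr
  have hqc : q = C c⁻¹ * p.reverse := by
    rw [hr, ← hc, mul_comm q (C c), ← mul_assoc, ← map_mul, inv_mul_cancel₀ hcne, map_one,
      one_mul]
  refine ⟨c⁻¹, inv_ne_zero hcne, ?_, hqc⟩
  -- α ^ 2 = 1
  have hrevrev : p.reverse.reverse = p := by
    have ht : p.natTrailingDegree = 0 := natTrailingDegree_eq_zero.mpr (Or.inr hp0)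
    have hd : p.reverse.natDegree = p.natDegree := by
      rw [reverse_natDegree, ht, Nat.sub_zero]
    rw [Polynomial.reverse, hd, Polynomial.reverse, reflect_reflect']
  have hrevq : q.reverse = C c⁻¹ * p := by
    rw [hqc, reverse_mul_of_domain, hrevrev]
    congr 1
    rw [Polynomial.reverse, natDegree_C, reflect_C, pow_zero, mul_one]
  have hfinal : p * p.reverse = C (c⁻¹ ^ 2) * (p * p.reverse) := by
    calc p * p.reverse = q * q.reverse := hkey
      _ = (C c⁻¹ * p.reverse) * (C c⁻¹ * p) := by rw [hrevq, hqc]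
      _ = C (c⁻¹ ^ 2) * (p * p.reverse) := by rw [map_pow]; ring
  have hne : p * p.reverse ≠ 0 := mul_ne_zero hp hrevp
  have h8 : (1 : Polynomial ℂ) * (p * p.reverse) = C (c⁻¹ ^ 2) * (p * p.reverse) := by
    rw [one_mul]; exact hfinal
  have h9 := mul_right_cancel₀ hne h8
  have h10 : C (c⁻¹ ^ 2) = C 1 := by rw [← h9, map_one]
  simpa using Polynomial.C_injective h10
end

section
/- Let α ∈ ℂ with α ≠ 0 and α ≠ ±1, and let A[α] be the algebra generated by E, F, Ψ with relations E² = α⁻¹E², F² = αF², ΨE = α⁻¹EΨ, ΨF = αFΨ, [E,F] = Ψ. Then (EF)² = 0, (FE)² = 0, and (EF)(FE) = 0 = (FE)(EF) in A[α]. -/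
noncomputable section

/-- The relations defining the algebra `A[α]`: `E² = α⁻¹E²`, `F² = αF²`,
`ΨE = α⁻¹EΨ`, `ΨF = αFΨ`, `EF - FE = Ψ`, where `E, F, Ψ` are the generators
`ι 0, ι 1, ι 2` of the free algebra on three generators. -/
inductive ARel (α : ℂ) : FreeAlgebra ℂ (Fin 3) → FreeAlgebra ℂ (Fin 3) → Prop
  | ee : ARel α (FreeAlgebra.ι ℂ (0 : Fin 3) * FreeAlgebra.ι ℂ (0 : Fin 3))
      (α⁻¹ • (FreeAlgebra.ι ℂ (0 : Fin 3) * FreeAlgebra.ι ℂ (0 : Fin 3)))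
  | ff : ARel α (FreeAlgebra.ι ℂ (1 : Fin 3) * FreeAlgebra.ι ℂ (1 : Fin 3))
      (α • (FreeAlgebra.ι ℂ (1 : Fin 3) * FreeAlgebra.ι ℂ (1 : Fin 3)))
  | pe : ARel α (FreeAlgebra.ι ℂ (2 : Fin 3) * FreeAlgebra.ι ℂ (0 : Fin 3))
      (α⁻¹ • (FreeAlgebra.ι ℂ (0 : Fin 3) * FreeAlgebra.ι ℂ (2 : Fin 3)))
  | pf : ARel α (FreeAlgebra.ι ℂ (2 : Fin 3) * FreeAlgebra.ι ℂ (1 : Fin 3))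
      (α • (FreeAlgebra.ι ℂ (1 : Fin 3) * FreeAlgebra.ι ℂ (2 : Fin 3)))
  | ef : ARel α (FreeAlgebra.ι ℂ (0 : Fin 3) * FreeAlgebra.ι ℂ (1 : Fin 3)
        - FreeAlgebra.ι ℂ (1 : Fin 3) * FreeAlgebra.ι ℂ (0 : Fin 3))
      (FreeAlgebra.ι ℂ (2 : Fin 3))

/-- The algebra `A[α]`. -/
abbrev AAlg (α : ℂ) := RingQuot (ARel α)

/-- The generator `E` of `A[α]`. -/
def Egen (α : ℂ) : AAlg α := RingQuot.mkAlgHom ℂ (ARel α) (FreeAlgebra.ι ℂ 0)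

/-- The generator `F` of `A[α]`. -/
def Fgen (α : ℂ) : AAlg α := RingQuot.mkAlgHom ℂ (ARel α) (FreeAlgebra.ι ℂ 1)

/-- The generator `Ψ` of `A[α]`. -/
def Pgen (α : ℂ) : AAlg α := RingQuot.mkAlgHom ℂ (ARel α) (FreeAlgebra.ι ℂ 2)

end

private lemma smul_cancel {M : Type*} [AddCommGroup M] [Module ℂ M] {c : ℂ} (hc : c ≠ 0)
    {x : M} (h : c • x = 0) : x = 0 := by
  have := congrArg (fun y => c⁻¹ • y) h
  simpa [inv_smul_smul₀ hc] using this

theorem EF_FE_nilpotency (α : ℂ) (h0 : α ≠ 0) (h1 : α ≠ 1) (h2 : α ≠ -1) :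
    (Egen α * Fgen α) ^ 2 = 0 ∧ (Fgen α * Egen α) ^ 2 = 0 ∧
    (Egen α * Fgen α) * (Fgen α * Egen α) = 0 ∧
    (Fgen α * Egen α) * (Egen α * Fgen α) = 0 := by
  set E := Egen α with hEdef
  set F := Fgen α with hFdef
  set P := Pgen α with hPdef
  have hEE : E * E = α⁻¹ • (E * E) := by
    simpa [hEdef, Egen, map_mul, map_smul] using
      RingQuot.mkAlgHom_rel ℂ (ARel.ee (α := α))
  have hFF : F * F = α • (F * F) := by
    simpa [hFdef, Fgen, map_mul, map_smul] using
      RingQuot.mkAlgHom_rel ℂ (ARel.ff (α := α))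
  have hPE : P * E = α⁻¹ • (E * P) := by
    simpa [hEdef, hPdef, Egen, Pgen, map_mul, map_smul] using
      RingQuot.mkAlgHom_rel ℂ (ARel.pe (α := α))
  have hPF : P * F = α • (F * P) := by
    simpa [hFdef, hPdef, Fgen, Pgen, map_mul, map_smul] using
      RingQuot.mkAlgHom_rel ℂ (ARel.pf (α := α))
  have hPsi : E * F - F * E = P := by
    simpa [hEdef, hFdef, hPdef, Egen, Fgen, Pgen, map_mul, map_sub] using
      RingQuot.mkAlgHom_rel ℂ (ARel.ef (α := α))
  -- E² = 0
  have hE2 : E * E = 0 := by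
    apply smul_cancel (c := 1 - α⁻¹)
    · intro h
      exact h1 (by have : α⁻¹ = 1 := by linear_combination -h
                   exact inv_eq_one.mp this)
    · rw [sub_smul, one_smul, ← hEE, sub_self]
  -- F² = 0
  have hF2 : F * F = 0 := by
    apply smul_cancel (c := 1 - α)
    · intro h
      exact h1 (by linear_combination -h)
    · rw [sub_smul, one_smul, ← hFF, sub_self]
  -- EFE = 0
  have hEFE : E * F * E = 0 := by
    have h := hPE
    rw [← hPsi] at h
    -- h : (E*F - F*E) * E = α⁻¹ • (E * (E*F - F*E))
    rw [sub_mul, mul_sub, mul_assoc F E E, hE2, mul_zero, sub_zero,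
        ← mul_assoc E E F, hE2, zero_mul, zero_sub, mul_assoc] at h
    apply smul_cancel (c := 1 + α⁻¹)
    · intro hc
      apply h2
      have hinv : α⁻¹ = -1 := by linear_combination hc
      have : α⁻¹ * α = -1 * α := by rw [hinv]
      rw [inv_mul_cancel₀ h0] at this
      linear_combination this
    · simp only [mul_assoc]
      rw [add_smul, one_smul]
      nth_rewrite 1 [h]
      rw [smul_neg, neg_add_cancel]
  -- FEF = 0
  have hFEF : F * E * F = 0 := by
    have h := hPF
    rw [← hPsi] at h
    rw [sub_mul, mul_sub, mul_assoc E F F, hF2, mul_zero, mul_assoc F E F,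
        ← mul_assoc F F E, hF2, zero_mul, sub_zero, zero_sub] at h
    rw [mul_assoc]
    apply smul_cancel (c := 1 + α)
    · intro hc
      exact h2 (by linear_combination hc)
    · rw [add_smul, one_smul, ← h, add_neg_cancel]
  refine ⟨?_, ?_, ?_, ?_⟩
  · rw [sq, ← mul_assoc, hEFE, zero_mul]
  · rw [sq, ← mul_assoc, hFEF, zero_mul]
  · rw [← mul_assoc, mul_assoc E F F, hF2, mul_zero, zero_mul]
  · rw [← mul_assoc, mul_assoc F E E, hE2, mul_zero, zero_mul]
end

section
/- Let α ∈ ℂ with α ≠ 0 and α ≠ ±1. In the algebra A[α] generated by E, F, Ψ with relations E² = α⁻¹E², F² = αF², ΨE = α⁻¹EΨ, ΨF = αFΨ, [E,F] = Ψ, the linear span of {E, F, Ψ, EF} is a two-sided ideal I of A[α] with I³ = 0, and A[α]/I ≅ ℂ. -/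
namespace AuxAAlg

set_option linter.unusedSectionVars false

variable {α : ℂ}

lemma smul_cancel {c : ℂ} (hc : c ≠ 1) {x : AAlg α} (h : x = c • x) : x = 0 := by
  have h' : (1 - c) • x = 0 := by linear_combination (norm := module) h
  have key : x = (1 - c)⁻¹ • ((1 - c) • x) := by
    match_scalars
    field_simp [sub_ne_zero.mpr hc.symm]
  rw [key, h', smul_zero]

lemma rel_ee : Egen α * Egen α = α⁻¹ • (Egen α * Egen α) := by
  simpa only [Egen, map_mul, map_smul] using RingQuot.mkAlgHom_rel ℂ (ARel.ee (α := α))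

lemma rel_ff : Fgen α * Fgen α = α • (Fgen α * Fgen α) := by
  simpa only [Fgen, map_mul, map_smul] using RingQuot.mkAlgHom_rel ℂ (ARel.ff (α := α))

lemma rel_pe : Pgen α * Egen α = α⁻¹ • (Egen α * Pgen α) := by
  simpa only [Pgen, Egen, map_mul, map_smul] using RingQuot.mkAlgHom_rel ℂ (ARel.pe (α := α))

lemma rel_pf : Pgen α * Fgen α = α • (Fgen α * Pgen α) := by
  simpa only [Pgen, Fgen, map_mul, map_smul] using RingQuot.mkAlgHom_rel ℂ (ARel.pf (α := α))

lemma rel_ef : Egen α * Fgen α - Fgen α * Egen α = Pgen α := by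
  simpa only [Egen, Fgen, Pgen, map_mul, map_sub] using RingQuot.mkAlgHom_rel ℂ (ARel.ef (α := α))

variable (h0 : α ≠ 0) (h1 : α ≠ 1) (h2 : α ≠ -1)

include h1 in
lemma e2 : Egen α * Egen α = 0 :=
  smul_cancel (by rw [ne_eq, inv_eq_one]; exact h1) rel_ee

include h1 in
lemma f2 : Fgen α * Fgen α = 0 := smul_cancel h1 rel_ff

include h1 in
lemma e2x (x : AAlg α) : Egen α * (Egen α * x) = 0 := by
  rw [← mul_assoc, e2 h1, zero_mul]

include h1 in
lemma f2x (x : AAlg α) : Fgen α * (Fgen α * x) = 0 := by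
  rw [← mul_assoc, f2 h1, zero_mul]

include h0 h1 h2 in
lemma efe : Egen α * (Fgen α * Egen α) = 0 := by
  have h := rel_pe (α := α)
  rw [← rel_ef] at h
  simp only [sub_mul, mul_sub, mul_assoc, e2 h1, e2x h1, mul_zero, zero_mul, sub_zero,
    zero_sub] at h
  have h' : Egen α * (Fgen α * Egen α) = (-α⁻¹) • (Egen α * (Fgen α * Egen α)) := by
    linear_combination (norm := module) h
  refine smul_cancel ?_ h'
  intro hc
  apply h2
  have hα : α⁻¹ = -1 := by linear_combination -hc
  field_simp at hα
  linear_combination hα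

include h0 h1 h2 in
lemma fef : Fgen α * (Egen α * Fgen α) = 0 := by
  have h := rel_pf (α := α)
  rw [← rel_ef] at h
  simp only [sub_mul, mul_sub, mul_assoc, f2 h1, f2x h1, mul_zero, zero_mul, sub_zero,
    zero_sub] at h
  have h' : Fgen α * (Egen α * Fgen α) = (-α) • (Fgen α * (Egen α * Fgen α)) := by
    linear_combination (norm := module) -h
  refine smul_cancel ?_ h'
  intro hc
  apply h2
  linear_combination -hc

include h0 h1 h2 in
lemma ep : Egen α * Pgen α = 0 := by
  rw [← rel_ef, mul_sub, e2x h1, efe h0 h1 h2, sub_zero]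

include h0 h1 h2 in
lemma pe0 : Pgen α * Egen α = 0 := by
  rw [rel_pe, ep h0 h1 h2, smul_zero]

include h0 h1 h2 in
lemma fp : Fgen α * Pgen α = 0 := by
  rw [← rel_ef, mul_sub, fef h0 h1 h2, f2x h1, sub_zero]

include h0 h1 h2 in
lemma pf0 : Pgen α * Fgen α = 0 := by
  rw [rel_pf, fp h0 h1 h2, smul_zero]

include h0 h1 h2 in
lemma pex (x : AAlg α) : Pgen α * (Egen α * x) = 0 := by
  rw [← mul_assoc, pe0 h0 h1 h2, zero_mul]

include h0 h1 h2 in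
lemma pp : Pgen α * Pgen α = 0 := by
  nth_rewrite 2 [← rel_ef]
  rw [mul_sub, pex h0 h1 h2, ← mul_assoc, pf0 h0 h1 h2, zero_mul, sub_zero]

/-- The generating set of the ideal `I`. -/
def Sset (α : ℂ) : Set (AAlg α) := {Egen α, Fgen α, Pgen α, Egen α * Fgen α}

/-- The ideal `I` as a submodule. -/
def Isub (α : ℂ) : Submodule ℂ (AAlg α) := Submodule.span ℂ (Sset α)

/-- The submodule `J = span {Ψ, EF}`, which contains `I·I`. -/
def Jsub (α : ℂ) : Submodule ℂ (AAlg α) :=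
  Submodule.span ℂ ({Pgen α, Egen α * Fgen α} : Set (AAlg α))

/-- The submodule `T = span {1, E, F, Ψ, EF}`, which is all of `A[α]`. -/
def Tsub (α : ℂ) : Submodule ℂ (AAlg α) := Submodule.span ℂ (insert 1 (Sset α))

lemma J_le_I : Jsub α ≤ Isub α := by
  apply Submodule.span_le.mpr
  rintro x (rfl | rfl)
  · exact Submodule.subset_span (by right; right; left; rfl)
  · exact Submodule.subset_span (by right; right; right; rfl)

lemma I_le_T : Isub α ≤ Tsub α :=
  Submodule.span_le.mpr fun x hx => Submodule.subset_span (Set.mem_insert_of_mem _ hx)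

include h0 h1 h2 in
lemma fe_eq : Fgen α * Egen α = Egen α * Fgen α - Pgen α := by
  rw [← rel_ef, sub_sub_cancel]

include h0 h1 h2 in
lemma prod_gen_mem_J {a b : AAlg α} (ha : a ∈ Sset α) (hb : b ∈ Sset α) :
    a * b ∈ Jsub α := by
  have hP : Pgen α ∈ Jsub α := Submodule.subset_span (by left; rfl)
  have hEF : Egen α * Fgen α ∈ Jsub α := Submodule.subset_span (by right; rfl)
  simp only [Sset, Set.mem_insert_iff, Set.mem_singleton_iff] at ha hb
  rcases ha with rfl | rfl | rfl | rfl <;> rcases hb with rfl | rfl | rfl | rfl <;>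
    first
      | exact hEF
      | (rw [fe_eq h0 h1 h2]; exact sub_mem hEF hP)
      | (simp only [mul_assoc, e2 h1, e2x h1, f2 h1, f2x h1, ep h0 h1 h2, fp h0 h1 h2,
          pe0 h0 h1 h2, pf0 h0 h1 h2, pp h0 h1 h2, efe h0 h1 h2, fef h0 h1 h2,
          pex h0 h1 h2, mul_zero, zero_mul]
         exact zero_mem _)

include h0 h1 h2 in
lemma gen_J_mul_gen_zero {j c : AAlg α}
    (hj : j ∈ ({Pgen α, Egen α * Fgen α} : Set (AAlg α))) (hc : c ∈ Sset α) : j * c = 0 := by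
  simp only [Sset, Set.mem_insert_iff, Set.mem_singleton_iff] at hj hc
  rcases hj with rfl | rfl <;> rcases hc with rfl | rfl | rfl | rfl <;>
    simp only [mul_assoc, e2 h1, e2x h1, f2 h1, f2x h1, ep h0 h1 h2, fp h0 h1 h2,
      pe0 h0 h1 h2, pf0 h0 h1 h2, pp h0 h1 h2, efe h0 h1 h2, fef h0 h1 h2,
      pex h0 h1 h2, mul_zero, zero_mul]

include h0 h1 h2 in
lemma mul_mem_J {a b : AAlg α} (ha : a ∈ Isub α) (hb : b ∈ Isub α) : a * b ∈ Jsub α := by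
  induction ha, hb using Submodule.span_induction₂ with
  | mem_mem x y hx hy => exact prod_gen_mem_J h0 h1 h2 hx hy
  | zero_left y hy => rw [zero_mul]; exact zero_mem _
  | zero_right x hx => rw [mul_zero]; exact zero_mem _
  | add_left x y z _ _ _ hx hy => rw [add_mul]; exact add_mem hx hy
  | add_right x y z _ _ _ hx hy => rw [mul_add]; exact add_mem hx hy
  | smul_left r x y _ _ hx => rw [smul_mul_assoc]; exact Submodule.smul_mem _ _ hx
  | smul_right r x y _ _ hx => rw [mul_smul_comm]; exact Submodule.smul_mem _ _ hx

include h0 h1 h2 in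
lemma J_mul_I_zero {j c : AAlg α} (hj : j ∈ Jsub α) (hc : c ∈ Isub α) : j * c = 0 := by
  induction hj using Submodule.span_induction with
  | mem x hx =>
    induction hc using Submodule.span_induction with
    | mem y hy => exact gen_J_mul_gen_zero h0 h1 h2 hx hy
    | zero => rw [mul_zero]
    | add y z _ _ hy hz => rw [mul_add, hy, hz, add_zero]
    | smul r y _ hy => rw [mul_smul_comm, hy, smul_zero]
  | zero => rw [zero_mul]
  | add x y _ _ hx hy => rw [add_mul, hx, hy, add_zero]
  | smul r x _ hx => rw [smul_mul_assoc, hx, smul_zero]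

include h0 h1 h2 in
lemma triple_zero {a b c : AAlg α} (ha : a ∈ Isub α) (hb : b ∈ Isub α) (hc : c ∈ Isub α) :
    a * b * c = 0 :=
  J_mul_I_zero h0 h1 h2 (mul_mem_J h0 h1 h2 ha hb) hc

include h0 h1 h2 in
lemma T_mul {x y : AAlg α} (hx : x ∈ Tsub α) (hy : y ∈ Tsub α) : x * y ∈ Tsub α := by
  induction hx, hy using Submodule.span_induction₂ with
  | mem_mem a b ha hb =>
    rcases ha with rfl | ha
    · rw [one_mul]; exact Submodule.subset_span hb
    · rcases hb with rfl | hb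
      · rw [mul_one]; exact Submodule.subset_span (Set.mem_insert_of_mem _ ha)
      · exact I_le_T (J_le_I (prod_gen_mem_J h0 h1 h2 ha hb))
  | zero_left y hy => rw [zero_mul]; exact zero_mem _
  | zero_right x hx => rw [mul_zero]; exact zero_mem _
  | add_left x y z _ _ _ hx hy => rw [add_mul]; exact add_mem hx hy
  | add_right x y z _ _ _ hx hy => rw [mul_add]; exact add_mem hx hy
  | smul_left r x y _ _ hx => rw [smul_mul_assoc]; exact Submodule.smul_mem _ _ hx
  | smul_right r x y _ _ hx => rw [mul_smul_comm]; exact Submodule.smul_mem _ _ hx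

include h0 h1 h2 in
lemma mem_T (x : AAlg α) : x ∈ Tsub α := by
  obtain ⟨y, rfl⟩ := RingQuot.mkAlgHom_surjective ℂ (ARel α) x
  induction y using FreeAlgebra.induction with
  | grade0 r =>
    rw [AlgHom.commutes, Algebra.algebraMap_eq_smul_one]
    exact Submodule.smul_mem _ _ (Submodule.subset_span (Set.mem_insert _ _))
  | grade1 i =>
    fin_cases i
    · exact Submodule.subset_span (by right; left; rfl)
    · exact Submodule.subset_span (by right; right; left; rfl)
    · exact Submodule.subset_span (by right; right; right; left; rfl)
  | mul a b ha hb => rw [map_mul]; exact T_mul h0 h1 h2 ha hb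
  | add a b ha hb => rw [map_add]; exact add_mem ha hb

include h0 h1 h2 in
lemma gen_mul_I {g : AAlg α} (hg : g ∈ insert 1 (Sset α)) {a : AAlg α} (ha : a ∈ Isub α) :
    g * a ∈ Isub α ∧ a * g ∈ Isub α := by
  rcases hg with rfl | hg
  · rw [one_mul, mul_one]; exact ⟨ha, ha⟩
  constructor
  · induction ha using Submodule.span_induction with
    | mem b hb => exact J_le_I (prod_gen_mem_J h0 h1 h2 hg hb)
    | zero => rw [mul_zero]; exact zero_mem _
    | add x y _ _ hx hy => rw [mul_add]; exact add_mem hx hy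
    | smul r x _ hx => rw [mul_smul_comm]; exact Submodule.smul_mem _ _ hx
  · induction ha using Submodule.span_induction with
    | mem b hb => exact J_le_I (prod_gen_mem_J h0 h1 h2 hb hg)
    | zero => rw [zero_mul]; exact zero_mem _
    | add x y _ _ hx hy => rw [add_mul]; exact add_mem hx hy
    | smul r x _ hx => rw [smul_mul_assoc]; exact Submodule.smul_mem _ _ hx

include h0 h1 h2 in
lemma ideal_closed {a : AAlg α} (ha : a ∈ Isub α) (x : AAlg α) :
    x * a ∈ Isub α ∧ a * x ∈ Isub α := by
  induction mem_T h0 h1 h2 x using Submodule.span_induction with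
  | mem g hg => exact gen_mul_I h0 h1 h2 hg ha
  | zero => rw [zero_mul, mul_zero]; exact ⟨zero_mem _, zero_mem _⟩
  | add x y _ _ hx hy =>
    rw [add_mul, mul_add]; exact ⟨add_mem hx.1 hy.1, add_mem hx.2 hy.2⟩
  | smul r x _ hx =>
    rw [smul_mul_assoc, mul_smul_comm]
    exact ⟨Submodule.smul_mem _ _ hx.1, Submodule.smul_mem _ _ hx.2⟩

/-- The augmentation homomorphism `A[α] → ℂ` killing all generators. -/
def piHom (α : ℂ) : AAlg α →ₐ[ℂ] ℂ :=
  RingQuot.liftAlgHom ℂ ⟨FreeAlgebra.lift ℂ (fun _ => (0 : ℂ)), by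
    intro x y h; cases h <;> simp⟩

lemma pi_E : piHom α (Egen α) = 0 := by
  simp [piHom, Egen, RingQuot.liftAlgHom_mkAlgHom_apply]

lemma pi_F : piHom α (Fgen α) = 0 := by
  simp [piHom, Fgen, RingQuot.liftAlgHom_mkAlgHom_apply]

lemma pi_P : piHom α (Pgen α) = 0 := by
  simp [piHom, Pgen, RingQuot.liftAlgHom_mkAlgHom_apply]

lemma pi_surj : Function.Surjective (piHom α) := fun c =>
  ⟨algebraMap ℂ (AAlg α) c, by simp [Algebra.algebraMap_self]⟩

include h0 h1 h2 in
lemma sub_pi_mem (x : AAlg α) : x - (piHom α x) • 1 ∈ Isub α := by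
  induction mem_T h0 h1 h2 x using Submodule.span_induction with
  | mem g hg =>
    rcases hg with rfl | hg
    · simp only [map_one, one_smul, sub_self]; exact zero_mem _
    · have hg' : g ∈ Isub α := Submodule.subset_span hg
      rcases hg with rfl | rfl | rfl | rfl
      · rw [pi_E, zero_smul, sub_zero]; exact hg'
      · rw [pi_F, zero_smul, sub_zero]; exact hg'
      · rw [pi_P, zero_smul, sub_zero]; exact hg'
      · rw [map_mul, pi_E, zero_mul, zero_smul, sub_zero]; exact hg'
  | zero => simp only [map_zero, zero_smul, sub_zero]; exact zero_mem _
  | add x y _ _ hx hy =>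
    have : x + y - (piHom α (x + y)) • 1
        = (x - (piHom α x) • 1) + (y - (piHom α y) • 1) := by
      rw [map_add]; module
    rw [this]; exact add_mem hx hy
  | smul r x _ hx =>
    have : r • x - (piHom α (r • x)) • 1 = r • (x - (piHom α x) • 1) := by
      rw [map_smul, smul_eq_mul]; module
    rw [this]; exact Submodule.smul_mem _ _ hx

include h0 h1 h2 in
lemma pi_zero_iff (a : AAlg α) : piHom α a = 0 ↔ a ∈ Isub α := by
  constructor
  · intro h
    have := sub_pi_mem h0 h1 h2 a
    rwa [h, zero_smul, sub_zero] at this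
  · intro ha
    induction ha using Submodule.span_induction with
    | mem g hg =>
      rcases hg with rfl | rfl | rfl | rfl
      · exact pi_E
      · exact pi_F
      · exact pi_P
      · rw [map_mul, pi_E, zero_mul]
    | zero => exact map_zero _
    | add x y _ _ hx hy => rw [map_add, hx, hy, add_zero]
    | smul r x _ hx => rw [map_smul, hx, smul_zero]

end AuxAAlg

theorem span_is_nilpotent_ideal_with_quotient_C (α : ℂ)
    (h0 : α ≠ 0) (h1 : α ≠ 1) (h2 : α ≠ -1) :
    ∃ I : Submodule ℂ (AAlg α),
      I = Submodule.span ℂ ({Egen α, Fgen α, Pgen α, Egen α * Fgen α} : Set (AAlg α)) ∧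
      (∀ a ∈ I, ∀ x : AAlg α, x * a ∈ I ∧ a * x ∈ I) ∧
      (∀ a ∈ I, ∀ b ∈ I, ∀ c ∈ I, a * b * c = 0) ∧
      ∃ π : AAlg α →ₐ[ℂ] ℂ, Function.Surjective π ∧ ∀ a : AAlg α, (π a = 0 ↔ a ∈ I) := by
  refine ⟨AuxAAlg.Isub α, rfl, ?_, ?_, AuxAAlg.piHom α, AuxAAlg.pi_surj, ?_⟩
  · exact fun a ha x => AuxAAlg.ideal_closed h0 h1 h2 ha x
  · exact fun a ha b hb c hc => AuxAAlg.triple_zero h0 h1 h2 ha hb hc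
  · exact fun a => AuxAAlg.pi_zero_iff h0 h1 h2 a
end

section
/- For every nonzero α ∈ ℂ with α ≠ ±1, every finite-dimensional irreducible module over A[α] is one-dimensional, and up to isomorphism A[α] has exactly one irreducible module, on which E, F, Ψ all act as zero. -/
section Helper

lemma my_scalar_cancel {M : Type*} [AddCommGroup M] [Module ℂ M] {c : ℂ} (hc : c ≠ 1)
    {X : M} (h : X = c • X) : X = 0 := by
  have h' : (1 - c) • X = 0 := by rw [sub_smul, one_smul, ← h, sub_self]
  rcases smul_eq_zero.mp h' with h'' | h''
  · exact absurd (by linear_combination -h'') hc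
  · exact h''

lemma my_scalar_cancel_neg {M : Type*} [AddCommGroup M] [Module ℂ M] {c : ℂ} (hc : c ≠ -1)
    {X : M} (h : X = c • (-X)) : X = 0 := by
  rw [smul_neg] at h
  have h' : (1 + c) • X = 0 := by
    rw [add_smul, one_smul]
    nth_rewrite 1 [h]
    exact neg_add_cancel (c • X)
  rcases smul_eq_zero.mp h' with h'' | h''
  · exact absurd (by linear_combination h'') hc
  · exact h''

end Helper

section Identities

variable {α : ℂ}

lemma my_EE (h1 : α ≠ 1) : Egen α * Egen α = 0 := by
  have h := RingQuot.mkAlgHom_rel ℂ (ARel.ee (α := α))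
  rw [map_mul, map_smul, map_mul] at h
  exact my_scalar_cancel (fun hc => h1 (inv_eq_one.mp hc)) h

lemma my_FF (h1 : α ≠ 1) : Fgen α * Fgen α = 0 := by
  have h := RingQuot.mkAlgHom_rel ℂ (ARel.ff (α := α))
  rw [map_mul, map_smul, map_mul] at h
  exact my_scalar_cancel h1 h

lemma my_EFFE : Egen α * Fgen α - Fgen α * Egen α = Pgen α := by
  have h := RingQuot.mkAlgHom_rel ℂ (ARel.ef (α := α))
  rw [map_sub, map_mul, map_mul] at h
  exact h

lemma my_EFE (h1 : α ≠ 1) (h2 : α ≠ -1) : Egen α * Fgen α * Egen α = 0 := by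
  have hpe := RingQuot.mkAlgHom_rel ℂ (ARel.pe (α := α))
  rw [map_mul, map_smul, map_mul] at hpe
  have ha : Pgen α * Egen α = Egen α * Fgen α * Egen α := by
    rw [← my_EFFE, sub_mul, mul_assoc (Fgen α), my_EE h1, mul_zero, sub_zero]
  have hb : Egen α * Pgen α = -(Egen α * Fgen α * Egen α) := by
    rw [← my_EFFE, mul_sub, ← mul_assoc, ← mul_assoc, my_EE h1, zero_mul, zero_sub]
  refine my_scalar_cancel_neg (c := α⁻¹) (fun hc => h2 (by rw [inv_eq_iff_eq_inv, inv_neg, inv_one] at hc; exact hc)) ?_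
  calc Egen α * Fgen α * Egen α = Pgen α * Egen α := ha.symm
    _ = α⁻¹ • (Egen α * Pgen α) := hpe
    _ = α⁻¹ • (-(Egen α * Fgen α * Egen α)) := by rw [hb]

lemma my_FEF (h1 : α ≠ 1) (h2 : α ≠ -1) : Fgen α * Egen α * Fgen α = 0 := by
  have hpf := RingQuot.mkAlgHom_rel ℂ (ARel.pf (α := α))
  rw [map_mul, map_smul, map_mul] at hpf
  have ha : Pgen α * Fgen α = -(Fgen α * Egen α * Fgen α) := by
    rw [← my_EFFE, sub_mul, mul_assoc (Egen α), my_FF h1, mul_zero, zero_sub]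
  have hb : Fgen α * Pgen α = Fgen α * Egen α * Fgen α := by
    rw [← my_EFFE, mul_sub, ← mul_assoc, ← mul_assoc, my_FF h1, zero_mul, sub_zero]
  refine my_scalar_cancel_neg (c := α) h2 ?_
  calc Fgen α * Egen α * Fgen α = -(Pgen α * Fgen α) := by rw [ha, neg_neg]
    _ = -(α • (Fgen α * Pgen α)) := congrArg Neg.neg hpf
    _ = α • (-(Fgen α * Egen α * Fgen α)) := by rw [hb, smul_neg]

lemma my_PE (h1 : α ≠ 1) (h2 : α ≠ -1) : Pgen α * Egen α = 0 := by
  rw [← my_EFFE, sub_mul, mul_assoc (Fgen α), my_EE h1, mul_zero, sub_zero]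
  exact my_EFE h1 h2

lemma my_EP (h1 : α ≠ 1) (h2 : α ≠ -1) : Egen α * Pgen α = 0 := by
  rw [← my_EFFE, mul_sub, ← mul_assoc, ← mul_assoc, my_EE h1, zero_mul, zero_sub,
    my_EFE h1 h2, neg_zero]

lemma my_PF (h1 : α ≠ 1) (h2 : α ≠ -1) : Pgen α * Fgen α = 0 := by
  rw [← my_EFFE, sub_mul, mul_assoc (Egen α), my_FF h1, mul_zero, zero_sub,
    my_FEF h1 h2, neg_zero]

lemma my_FP (h1 : α ≠ 1) (h2 : α ≠ -1) : Fgen α * Pgen α = 0 := by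
  rw [← my_EFFE, mul_sub, ← mul_assoc, ← mul_assoc, my_FF h1, zero_mul, sub_zero]
  exact my_FEF h1 h2

lemma my_PP (h1 : α ≠ 1) (h2 : α ≠ -1) : Pgen α * Pgen α = 0 := by
  nth_rewrite 1 [← my_EFFE]
  rw [sub_mul, mul_assoc, mul_assoc, my_FP h1 h2, my_EP h1 h2,
    mul_zero, mul_zero, sub_zero]

end Identities

noncomputable section Eps

def myEps (α : ℂ) : AAlg α →ₐ[ℂ] ℂ :=
  RingQuot.liftAlgHom ℂ ⟨FreeAlgebra.lift ℂ (fun _ => (0 : ℂ)), by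
    rintro x y ⟨⟩ <;> simp⟩

lemma myEps_mk (α : ℂ) (x : FreeAlgebra ℂ (Fin 3)) :
    myEps α (RingQuot.mkAlgHom ℂ (ARel α) x) = FreeAlgebra.lift ℂ (fun _ => (0 : ℂ)) x :=
  RingQuot.liftAlgHom_mkAlgHom_apply _ _ _ _

end Eps

section ModulePart

variable {α : ℂ} {W : Type} [AddCommGroup W] [Module ℂ W] [Module (AAlg α) W]
  [IsScalarTower ℂ (AAlg α) W]

lemma my_smul_comm (r : ℂ) (a : AAlg α) (w : W) : a • (r • w) = r • (a • w) := by
  rw [← algebraMap_smul (AAlg α) r w, ← mul_smul, ← Algebra.commutes, mul_smul,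
    algebraMap_smul]

lemma my_P_ker (h1 : α ≠ 1) (h2 : α ≠ -1) (x : FreeAlgebra ℂ (Fin 3)) :
    ∀ w : W, Pgen α • w = 0 → Pgen α • (RingQuot.mkAlgHom ℂ (ARel α) x • w) = 0 := by
  induction x using FreeAlgebra.induction with
  | grade0 r =>
    intro w hw
    rw [AlgHom.commutes, algebraMap_smul, my_smul_comm, hw, smul_zero]
  | grade1 i =>
    intro w hw
    fin_cases i
    · show Pgen α • (Egen α • w) = 0
      rw [← mul_smul, my_PE h1 h2, zero_smul]
    · show Pgen α • (Fgen α • w) = 0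
      rw [← mul_smul, my_PF h1 h2, zero_smul]
    · show Pgen α • (Pgen α • w) = 0
      rw [← mul_smul, my_PP h1 h2, zero_smul]
  | mul x y ihx ihy =>
    intro w hw
    rw [map_mul, mul_smul]
    exact ihx _ (ihy _ hw)
  | add x y ihx ihy =>
    intro w hw
    rw [map_add, add_smul, smul_add, ihx _ hw, ihy _ hw, add_zero]

lemma my_P_zero (h1 : α ≠ 1) (h2 : α ≠ -1) (hs : IsSimpleModule (AAlg α) W) :
    ∀ w : W, Pgen α • w = 0 := by
  let K : Submodule (AAlg α) W :=
    { carrier := {w | Pgen α • w = 0}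
      add_mem' := fun ha hb => by simp only [Set.mem_setOf_eq] at *; rw [smul_add, ha, hb, add_zero]
      zero_mem' := by simp only [Set.mem_setOf_eq, smul_zero]
      smul_mem' := fun a w hw => by
        obtain ⟨x, rfl⟩ := RingQuot.mkAlgHom_surjective ℂ (ARel α) a
        exact my_P_ker h1 h2 x w hw }
  have hmem : ∀ w : W, Pgen α • w ∈ K := fun w => by
    show Pgen α • (Pgen α • w) = 0
    rw [← mul_smul, my_PP h1 h2, zero_smul]
  rcases hs.toIsSimpleOrder.2 K with hK | hK
  · intro w
    exact (Submodule.mem_bot _).mp (hK ▸ hmem w)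
  · intro w
    exact (hK ▸ Submodule.mem_top : w ∈ K)

lemma my_E_ker (h1 : α ≠ 1) (h2 : α ≠ -1) (hP : ∀ w : W, Pgen α • w = 0)
    (x : FreeAlgebra ℂ (Fin 3)) :
    ∀ w : W, Egen α • w = 0 → Egen α • (RingQuot.mkAlgHom ℂ (ARel α) x • w) = 0 := by
  have hEF : Egen α * Fgen α = Fgen α * Egen α + Pgen α := by
    rw [← my_EFFE (α := α)]; abel
  induction x using FreeAlgebra.induction with
  | grade0 r =>
    intro w hw
    rw [AlgHom.commutes, algebraMap_smul, my_smul_comm, hw, smul_zero]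
  | grade1 i =>
    intro w hw
    fin_cases i
    · show Egen α • (Egen α • w) = 0
      rw [← mul_smul, my_EE h1, zero_smul]
    · show Egen α • (Fgen α • w) = 0
      rw [← mul_smul, hEF, add_smul, mul_smul, hw, smul_zero, hP, add_zero]
    · show Egen α • (Pgen α • w) = 0
      rw [hP, smul_zero]
  | mul x y ihx ihy =>
    intro w hw
    rw [map_mul, mul_smul]
    exact ihx _ (ihy _ hw)
  | add x y ihx ihy =>
    intro w hw
    rw [map_add, add_smul, smul_add, ihx _ hw, ihy _ hw, add_zero]

lemma my_F_ker (h1 : α ≠ 1) (h2 : α ≠ -1) (hP : ∀ w : W, Pgen α • w = 0)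
    (x : FreeAlgebra ℂ (Fin 3)) :
    ∀ w : W, Fgen α • w = 0 → Fgen α • (RingQuot.mkAlgHom ℂ (ARel α) x • w) = 0 := by
  have hFE : Fgen α * Egen α = Egen α * Fgen α - Pgen α := by
    rw [← my_EFFE (α := α)]; abel
  induction x using FreeAlgebra.induction with
  | grade0 r =>
    intro w hw
    rw [AlgHom.commutes, algebraMap_smul, my_smul_comm, hw, smul_zero]
  | grade1 i =>
    intro w hw
    fin_cases i
    · show Fgen α • (Egen α • w) = 0
      rw [← mul_smul, hFE, sub_smul, mul_smul, hw, smul_zero, hP, sub_zero]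
    · show Fgen α • (Fgen α • w) = 0
      rw [← mul_smul, my_FF h1, zero_smul]
    · show Fgen α • (Pgen α • w) = 0
      rw [hP, smul_zero]
  | mul x y ihx ihy =>
    intro w hw
    rw [map_mul, mul_smul]
    exact ihx _ (ihy _ hw)
  | add x y ihx ihy =>
    intro w hw
    rw [map_add, add_smul, smul_add, ihx _ hw, ihy _ hw, add_zero]

lemma my_E_zero (h1 : α ≠ 1) (h2 : α ≠ -1) (hs : IsSimpleModule (AAlg α) W) :
    ∀ w : W, Egen α • w = 0 := by
  have hP := my_P_zero h1 h2 hs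
  let K : Submodule (AAlg α) W :=
    { carrier := {w | Egen α • w = 0}
      add_mem' := fun ha hb => by simp only [Set.mem_setOf_eq] at *; rw [smul_add, ha, hb, add_zero]
      zero_mem' := by simp only [Set.mem_setOf_eq, smul_zero]
      smul_mem' := fun a w hw => by
        obtain ⟨x, rfl⟩ := RingQuot.mkAlgHom_surjective ℂ (ARel α) a
        exact my_E_ker h1 h2 hP x w hw }
  have hmem : ∀ w : W, Egen α • w ∈ K := fun w => by
    show Egen α • (Egen α • w) = 0
    rw [← mul_smul, my_EE h1, zero_smul]
  rcases hs.toIsSimpleOrder.2 K with hK | hK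
  · intro w
    exact (Submodule.mem_bot _).mp (hK ▸ hmem w)
  · intro w
    exact (hK ▸ Submodule.mem_top : w ∈ K)

lemma my_F_zero (h1 : α ≠ 1) (h2 : α ≠ -1) (hs : IsSimpleModule (AAlg α) W) :
    ∀ w : W, Fgen α • w = 0 := by
  have hP := my_P_zero h1 h2 hs
  let K : Submodule (AAlg α) W :=
    { carrier := {w | Fgen α • w = 0}
      add_mem' := fun ha hb => by simp only [Set.mem_setOf_eq] at *; rw [smul_add, ha, hb, add_zero]
      zero_mem' := by simp only [Set.mem_setOf_eq, smul_zero]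
      smul_mem' := fun a w hw => by
        obtain ⟨x, rfl⟩ := RingQuot.mkAlgHom_surjective ℂ (ARel α) a
        exact my_F_ker h1 h2 hP x w hw }
  have hmem : ∀ w : W, Fgen α • w ∈ K := fun w => by
    show Fgen α • (Fgen α • w) = 0
    rw [← mul_smul, my_FF h1, zero_smul]
  rcases hs.toIsSimpleOrder.2 K with hK | hK
  · intro w
    exact (Submodule.mem_bot _).mp (hK ▸ hmem w)
  · intro w
    exact (hK ▸ Submodule.mem_top : w ∈ K)

/-- If the generators act as zero, every element acts through `myEps`. -/
lemma my_act_eps (hE : ∀ w : W, Egen α • w = 0) (hF : ∀ w : W, Fgen α • w = 0)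
    (hP : ∀ w : W, Pgen α • w = 0) (a : AAlg α) (w : W) :
    a • w = myEps α a • w := by
  obtain ⟨x, rfl⟩ := RingQuot.mkAlgHom_surjective ℂ (ARel α) a
  induction x using FreeAlgebra.induction generalizing w with
  | grade0 r =>
    rw [AlgHom.commutes, AlgHom.commutes, algebraMap_smul]
    norm_num
  | grade1 i =>
    rw [myEps_mk, FreeAlgebra.lift_ι_apply, zero_smul]
    fin_cases i
    · exact hE w
    · exact hF w
    · exact hP w
  | mul x y ihx ihy =>
    rw [map_mul, mul_smul, ihy, my_smul_comm, ihx, smul_smul, map_mul, mul_comm]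
  | add x y ihx ihy =>
    rw [map_add, add_smul, ihx, ihy, map_add, add_smul]

lemma my_simple_C (hE : ∀ w : W, Egen α • w = 0) (hF : ∀ w : W, Fgen α • w = 0)
    (hP : ∀ w : W, Pgen α • w = 0) (hs : IsSimpleModule (AAlg α) W) :
    IsSimpleModule ℂ W := by
  haveI := hs
  haveI : Nontrivial W := IsSimpleModule.nontrivial (AAlg α) W
  refine { toIsSimpleOrder := ⟨fun S => ?_⟩ }
  let S' : Submodule (AAlg α) W :=
    { carrier := S
      add_mem' := fun ha hb => S.add_mem ha hb
      zero_mem' := S.zero_mem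
      smul_mem' := fun a w hw => by
        rw [my_act_eps hE hF hP]
        exact S.smul_mem _ hw }
  rcases hs.toIsSimpleOrder.2 S' with hK | hK
  · left
    rw [Submodule.eq_bot_iff] at hK ⊢
    exact hK
  · right
    rw [Submodule.eq_top_iff'] at hK ⊢
    exact hK

end ModulePart

theorem irreducible_modules_one_dimensional (α : ℂ)
    (h0 : α ≠ 0) (h1 : α ≠ 1) (h2 : α ≠ -1) :
    (∀ (W : Type) [AddCommGroup W] [Module ℂ W] [Module (AAlg α) W]
        [IsScalarTower ℂ (AAlg α) W], FiniteDimensional ℂ W →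
        IsSimpleModule (AAlg α) W →
        Module.finrank ℂ W = 1 ∧
        ∀ w : W, Egen α • w = 0 ∧ Fgen α • w = 0 ∧ Pgen α • w = 0) ∧
    (∀ (W₁ W₂ : Type) [AddCommGroup W₁] [Module ℂ W₁] [Module (AAlg α) W₁]
        [IsScalarTower ℂ (AAlg α) W₁] [AddCommGroup W₂] [Module ℂ W₂]
        [Module (AAlg α) W₂] [IsScalarTower ℂ (AAlg α) W₂],
        FiniteDimensional ℂ W₁ → IsSimpleModule (AAlg α) W₁ →
        FiniteDimensional ℂ W₂ → IsSimpleModule (AAlg α) W₂ →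
        Nonempty (W₁ ≃ₗ[AAlg α] W₂)) := by
  constructor
  · intro W _ _ _ _ _ hs
    have hE := my_E_zero h1 h2 hs
    have hF := my_F_zero h1 h2 hs
    have hP := my_P_zero h1 h2 hs
    exact ⟨isSimpleModule_iff_finrank_eq_one.mp (my_simple_C hE hF hP hs),
      fun w => ⟨hE w, hF w, hP w⟩⟩
  · intro W₁ W₂ _ _ _ _ _ _ _ _ hfd₁ hs₁ hfd₂ hs₂
    have hE₁ := my_E_zero h1 h2 hs₁
    have hF₁ := my_F_zero h1 h2 hs₁
    have hP₁ := my_P_zero h1 h2 hs₁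
    have hE₂ := my_E_zero h1 h2 hs₂
    have hF₂ := my_F_zero h1 h2 hs₂
    have hP₂ := my_P_zero h1 h2 hs₂
    have hr₁ := isSimpleModule_iff_finrank_eq_one.mp (my_simple_C hE₁ hF₁ hP₁ hs₁)
    have hr₂ := isSimpleModule_iff_finrank_eq_one.mp (my_simple_C hE₂ hF₂ hP₂ hs₂)
    have f : W₁ ≃ₗ[ℂ] W₂ := LinearEquiv.ofFinrankEq W₁ W₂ (by rw [hr₁, hr₂])
    let g : W₁ →ₗ[AAlg α] W₂ :=
      { toFun := f
        map_add' := map_add f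
        map_smul' := fun a w => by
          simp only [RingHom.id_apply]
          rw [my_act_eps hE₁ hF₁ hP₁, map_smul, ← my_act_eps hE₂ hF₂ hP₂] }
    exact ⟨LinearEquiv.ofBijective g f.bijective⟩
end

section
/- The algebra A[-1], generated by E, F, Ψ with relations E² = 0, F² = 0, ΨE = −EΨ, ΨF = −FΨ, EF − FE = Ψ, is spanned as a vector space by the elements E^i F^j Ψ^k with i, j ∈ {0,1} and k ∈ ℕ. -/
noncomputable section AuxProof

local notation "E" => Egen (-1)
local notation "F" => Fgen (-1)
local notation "P" => Pgen (-1)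

private lemma nmul (a b : AAlg (-1)) : -a * b = -(a * b) := neg_mul a b
private lemma mneg (a b : AAlg (-1)) : a * -b = -(a * b) := mul_neg a b
private lemma nneg (a : AAlg (-1)) : - -a = a := neg_neg a
private lemma sbm (a b c : AAlg (-1)) : (a - b) * c = a * c - b * c := sub_mul a b c
private lemma adm (a b c : AAlg (-1)) : (a + b) * c = a * c + b * c := add_mul a b c
private lemma zmul (a : AAlg (-1)) : 0 * a = 0 := zero_mul a
private lemma mzero (a : AAlg (-1)) : a * 0 = 0 := mul_zero a
private lemma onemul (a : AAlg (-1)) : 1 * a = a := one_mul a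
private lemma mulone (a : AAlg (-1)) : a * 1 = a := mul_one a
private lemma zsub (a : AAlg (-1)) : 0 - a = -a := zero_sub a
private lemma pzero (a : AAlg (-1)) : a ^ (0 : ℕ) = 1 := pow_zero a
private lemma pone (a : AAlg (-1)) : a ^ (1 : ℕ) = a := pow_one a

private lemma hEE : E * E = 0 := by
  have h : E * E = -(E * E) := by
    have h0 := RingQuot.mkAlgHom_rel ℂ (ARel.ee (α := (-1 : ℂ)))
    simpa [Egen, map_mul, map_smul, inv_neg, inv_one] using h0
  have h2 : (2 : ℂ) • (E * E) = 0 := by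
    rw [two_smul]
    nth_rewrite 1 [h]
    exact neg_add_cancel _
  exact (smul_eq_zero.mp h2).resolve_left (by norm_num)

private lemma hFF : F * F = 0 := by
  have h : F * F = -(F * F) := by
    have h0 := RingQuot.mkAlgHom_rel ℂ (ARel.ff (α := (-1 : ℂ)))
    simpa [Fgen, map_mul, map_smul] using h0
  have h2 : (2 : ℂ) • (F * F) = 0 := by
    rw [two_smul]
    nth_rewrite 1 [h]
    exact neg_add_cancel _
  exact (smul_eq_zero.mp h2).resolve_left (by norm_num)

private lemma hPE : P * E = -(E * P) := by
  have h0 := RingQuot.mkAlgHom_rel ℂ (ARel.pe (α := (-1 : ℂ)))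
  simpa [Egen, Pgen, map_mul, map_smul, inv_neg, inv_one] using h0

private lemma hPF : P * F = -(F * P) := by
  have h0 := RingQuot.mkAlgHom_rel ℂ (ARel.pf (α := (-1 : ℂ)))
  simpa [Fgen, Pgen, map_mul, map_smul] using h0

private lemma hEF : E * F - F * E = P := by
  have h0 := RingQuot.mkAlgHom_rel ℂ (ARel.ef (α := (-1 : ℂ)))
  simpa [Egen, Fgen, Pgen, map_mul, map_sub] using h0

private lemma hEEx (x : AAlg (-1)) : E * (E * x) = 0 := by
  rw [← mul_assoc, hEE, zmul]

private lemma hFFx (x : AAlg (-1)) : F * (F * x) = 0 := by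
  rw [← mul_assoc, hFF, zmul]

private lemma hPEx (x : AAlg (-1)) : P * (E * x) = -(E * (P * x)) := by
  rw [← mul_assoc, hPE, nmul, mul_assoc]

private lemma hPFx (x : AAlg (-1)) : P * (F * x) = -(F * (P * x)) := by
  rw [← mul_assoc, hPF, nmul, mul_assoc]

private lemma hFE : F * E = E * F - P :=
  eq_sub_of_add_eq ((add_comm (F * E) P).trans (sub_eq_iff_eq_add.mp hEF).symm)

private lemma hFEx (x : AAlg (-1)) : F * (E * x) = E * (F * x) - P * x := by
  rw [← mul_assoc, hFE, sbm, mul_assoc]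

private def S : Submodule ℂ (AAlg (-1)) :=
  Submodule.span ℂ
    { x : AAlg (-1) | ∃ (i j : Fin 2) (k : ℕ),
        x = Egen (-1) ^ (i : ℕ) * Fgen (-1) ^ (j : ℕ) * Pgen (-1) ^ k }

private lemma mono (i j : Fin 2) (k : ℕ) :
    E ^ (i : ℕ) * F ^ (j : ℕ) * P ^ k ∈ S :=
  Submodule.subset_span ⟨i, j, k, rfl⟩

private lemma mem_Pk (k : ℕ) : P ^ k ∈ S := by
  have h := mono 0 0 k
  rwa [Fin.val_zero, pzero, pzero, mulone, onemul] at h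

private lemma mem_EPk (k : ℕ) : E * P ^ k ∈ S := by
  have h := mono 1 0 k
  rwa [Fin.val_zero, Fin.val_one, pzero, pone, mulone] at h

private lemma mem_FPk (k : ℕ) : F * P ^ k ∈ S := by
  have h := mono 0 1 k
  rwa [Fin.val_zero, Fin.val_one, pzero, pone, onemul] at h

private lemma mem_EFPk (k : ℕ) : E * (F * P ^ k) ∈ S := by
  have h := mono 1 1 k
  rwa [Fin.val_one, pone, pone, mul_assoc] at h

private lemma mem_one : (1 : AAlg (-1)) ∈ S := by
  have h := mem_Pk 0
  rwa [pzero] at h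

private lemma PPk (k : ℕ) : P * P ^ k = P ^ (k + 1) := (pow_succ' P k).symm

private lemma mul_mem_S (g : AAlg (-1))
    (h : ∀ (i j : Fin 2) (k : ℕ), g * (E ^ (i : ℕ) * F ^ (j : ℕ) * P ^ k) ∈ S) :
    ∀ s ∈ S, g * s ∈ S := by
  intro s hs
  have hle : S ≤ Submodule.comap (LinearMap.mulLeft ℂ g) S := by
    apply Submodule.span_le.mpr
    rintro x ⟨i, j, k, rfl⟩
    exact h i j k
  exact hle hs

private lemma mulE : ∀ s ∈ S, E * s ∈ S := by
  apply mul_mem_S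
  intro i j k
  fin_cases i <;> fin_cases j <;>
    simp only [Fin.zero_eta, Fin.mk_one, Fin.isValue, Fin.val_zero, Fin.val_one,
      pzero, pone, onemul, mulone]
  · exact mem_EPk k
  · exact mem_EFPk k
  · rw [hEEx]; exact S.zero_mem
  · rw [mul_assoc, hEEx]; exact S.zero_mem

private lemma mulF : ∀ s ∈ S, F * s ∈ S := by
  apply mul_mem_S
  intro i j k
  fin_cases i <;> fin_cases j <;>
    simp only [Fin.zero_eta, Fin.mk_one, Fin.isValue, Fin.val_zero, Fin.val_one,
      pzero, pone, onemul, mulone]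
  · exact mem_FPk k
  · rw [hFFx]; exact S.zero_mem
  · rw [hFEx, PPk]
    exact S.sub_mem (mem_EFPk k) (mem_Pk (k + 1))
  · rw [mul_assoc, hFEx, hFFx, hPFx, mzero, PPk, zsub, nneg]
    exact mem_FPk (k + 1)

private lemma mulP : ∀ s ∈ S, P * s ∈ S := by
  apply mul_mem_S
  intro i j k
  fin_cases i <;> fin_cases j <;>
    simp only [Fin.zero_eta, Fin.mk_one, Fin.isValue, Fin.val_zero, Fin.val_one,
      pzero, pone, onemul, mulone]
  · rw [PPk]; exact mem_Pk (k + 1)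
  · rw [hPFx, PPk]; exact S.neg_mem (mem_FPk (k + 1))
  · rw [hPEx, PPk]; exact S.neg_mem (mem_EPk (k + 1))
  · rw [mul_assoc, hPEx, hPFx, PPk, mneg, nneg]
    exact mem_EFPk (k + 1)

private lemma key : ∀ y : FreeAlgebra ℂ (Fin 3),
    ∀ s ∈ S, RingQuot.mkAlgHom ℂ (ARel (-1)) y * s ∈ S := by
  intro y
  refine FreeAlgebra.induction ℂ (Fin 3)
    (motive := fun y => ∀ s ∈ S, RingQuot.mkAlgHom ℂ (ARel (-1)) y * s ∈ S) ?_ ?_ ?_ ?_ y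
  · intro r s hs
    rw [AlgHom.commutes]
    exact (Algebra.smul_def r s) ▸ S.smul_mem r hs
  · intro x
    fin_cases x
    · exact mulE
    · exact mulF
    · exact mulP
  · intro a b ha hb s hs
    rw [map_mul, mul_assoc]
    exact ha _ (hb s hs)
  · intro a b ha hb s hs
    rw [map_add, adm]
    exact S.add_mem (ha s hs) (hb s hs)

end AuxProof

theorem A_neg_one_spanned_by_monomials :
    Submodule.span ℂ
      { x : AAlg (-1) | ∃ (i j : Fin 2) (k : ℕ),
          x = Egen (-1) ^ (i : ℕ) * Fgen (-1) ^ (j : ℕ) * Pgen (-1) ^ k } = ⊤ := by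
  rw [eq_top_iff]
  rintro x -
  obtain ⟨y, rfl⟩ := RingQuot.mkAlgHom_surjective ℂ (ARel (-1)) x
  have h := key y 1 mem_one
  rwa [mulone] at h
end

section
/- Let W be a finite-dimensional irreducible A[-1]-module on which Ψ acts with eigenvalue 0 on some nonzero vector. Then Ψ, E, and F all act as zero on W and W is one-dimensional. -/
section Aux

lemma half_zero {M : Type*} [AddCommGroup M] [Module ℂ M] (x : M) (h : x = -x) : x = 0 := by
  have h2 : (2 : ℂ) • x = 0 := by
    rw [two_smul]; nth_rewrite 2 [h]; simp
  calc x = (2 : ℂ)⁻¹ • ((2 : ℂ) • x) := by rw [smul_smul]; norm_num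
  _ = 0 := by rw [h2, smul_zero]

/-- The subalgebra of endomorphisms preserving a subspace. -/
def presAlg {W : Type} [AddCommGroup W] [Module ℂ W] (U : Submodule ℂ W) :
    Subalgebra ℂ (Module.End ℂ W) where
  carrier := {T | ∀ x ∈ U, T x ∈ U}
  mul_mem' := fun hT hT' x hx => hT _ (hT' _ hx)
  add_mem' := fun hT hT' x hx => U.add_mem (hT x hx) (hT' x hx)
  algebraMap_mem' := fun c x hx => by
    simpa [Module.algebraMap_end_apply] using U.smul_mem c hx

lemma mem_presAlg {W : Type} [AddCommGroup W] [Module ℂ W] (U : Submodule ℂ W)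
    (T : Module.End ℂ W) : T ∈ presAlg U ↔ ∀ x ∈ U, T x ∈ U := Iff.rfl

/-- Algebra relations in `A[-1]`. -/
lemma Egen_sq : Egen (-1) * Egen (-1) = 0 := by
  have h1 := RingQuot.mkAlgHom_rel ℂ (ARel.ee (α := -1))
  rw [map_mul, map_smul, map_mul] at h1
  refine half_zero _ ?_
  calc Egen (-1) * Egen (-1) = ((-1 : ℂ))⁻¹ • (Egen (-1) * Egen (-1)) := by rw [Egen]; exact h1
  _ = -(Egen (-1) * Egen (-1)) := by
      rw [show ((-1 : ℂ))⁻¹ = -1 by norm_num]; exact neg_one_smul (M := AAlg (-1)) ℂ _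

lemma Fgen_sq : Fgen (-1) * Fgen (-1) = 0 := by
  have h1 := RingQuot.mkAlgHom_rel ℂ (ARel.ff (α := -1))
  rw [map_mul, map_smul, map_mul] at h1
  refine half_zero _ ?_
  calc Fgen (-1) * Fgen (-1) = (-1 : ℂ) • (Fgen (-1) * Fgen (-1)) := by rw [Fgen]; exact h1
  _ = -(Fgen (-1) * Fgen (-1)) := neg_one_smul (M := AAlg (-1)) ℂ _

lemma PE_anticomm : Pgen (-1) * Egen (-1) = -(Egen (-1) * Pgen (-1)) := by
  have h1 := RingQuot.mkAlgHom_rel ℂ (ARel.pe (α := -1))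
  rw [map_mul, map_smul, map_mul] at h1
  calc Pgen (-1) * Egen (-1) = ((-1 : ℂ))⁻¹ • (Egen (-1) * Pgen (-1)) := by
        rw [Pgen, Egen]; exact h1
  _ = -(Egen (-1) * Pgen (-1)) := by
      rw [show ((-1 : ℂ))⁻¹ = -1 by norm_num]; exact neg_one_smul (M := AAlg (-1)) ℂ _

lemma PF_anticomm : Pgen (-1) * Fgen (-1) = -(Fgen (-1) * Pgen (-1)) := by
  have h1 := RingQuot.mkAlgHom_rel ℂ (ARel.pf (α := -1))
  rw [map_mul, map_smul, map_mul] at h1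
  calc Pgen (-1) * Fgen (-1) = (-1 : ℂ) • (Fgen (-1) * Pgen (-1)) := by
        rw [Pgen, Fgen]; exact h1
  _ = -(Fgen (-1) * Pgen (-1)) := neg_one_smul (M := AAlg (-1)) ℂ _

lemma EF_comm : Egen (-1) * Fgen (-1) - Fgen (-1) * Egen (-1) = Pgen (-1) := by
  have h1 := RingQuot.mkAlgHom_rel ℂ (ARel.ef (α := -1))
  rw [map_sub, map_mul, map_mul] at h1
  exact h1

end Aux

theorem simple_module_with_psi_kernel_is_trivial
    (W : Type) [AddCommGroup W] [Module ℂ W] [Module (AAlg (-1)) W]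
    [IsScalarTower ℂ (AAlg (-1)) W] [FiniteDimensional ℂ W]
    (hsimple : IsSimpleModule (AAlg (-1)) W)
    (hw : ∃ w : W, w ≠ 0 ∧ Pgen (-1) • w = 0) :
    (∀ w : W, Pgen (-1) • w = 0 ∧ Egen (-1) • w = 0 ∧ Fgen (-1) • w = 0) ∧
    Module.finrank ℂ W = 1 := by
  obtain ⟨w₀, hw₀, hPw₀⟩ := hw
  set ρ : AAlg (-1) →ₐ[ℂ] Module.End ℂ W := Algebra.lsmul ℂ ℂ W with hρ
  have hρ_apply : ∀ (a : AAlg (-1)) (x : W), ρ a x = a • x := fun a x => rfl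
  -- key generation lemma
  have key : ∀ S : Subalgebra ℂ (Module.End ℂ W), ρ (Egen (-1)) ∈ S →
      ρ (Fgen (-1)) ∈ S → ρ (Pgen (-1)) ∈ S → ∀ a : AAlg (-1), ρ a ∈ S := by
    intro S hE hF hP a
    obtain ⟨x, rfl⟩ := RingQuot.mkAlgHom_surjective ℂ (ARel (-1)) a
    induction x using FreeAlgebra.induction with
    | grade0 r =>
        rw [(RingQuot.mkAlgHom ℂ (ARel (-1))).commutes r, ρ.commutes r]
        exact S.algebraMap_mem r
    | grade1 i => fin_cases i <;> [exact hE; exact hF; exact hP]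
    | mul a b ha hb => rw [map_mul, map_mul]; exact S.mul_mem ha hb
    | add a b ha hb => rw [map_add, map_add]; exact S.add_mem ha hb
  have hW : Nontrivial W := ⟨⟨w₀, 0, hw₀⟩⟩
  -- a nonzero invariant subspace is everything
  have step : ∀ U : Submodule ℂ W, ρ (Egen (-1)) ∈ presAlg U → ρ (Fgen (-1)) ∈ presAlg U →
      ρ (Pgen (-1)) ∈ presAlg U → ∀ x₀ : W, x₀ ≠ 0 → x₀ ∈ U → ∀ x : W, x ∈ U := by
    intro U hE hF hP x₀ hx₀ hx₀U
    have hinv := key (presAlg U) hE hF hP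
    let N : Submodule (AAlg (-1)) W :=
      { carrier := U
        add_mem' := fun ha hb => U.add_mem ha hb
        zero_mem' := U.zero_mem
        smul_mem' := fun a x hx => hinv a x hx }
    have hmem : ∀ x : W, x ∈ N ↔ x ∈ U := fun x => Iff.rfl
    rcases hsimple.eq_bot_or_eq_top (a := N) with h | h
    · exfalso
      apply hx₀
      have : x₀ ∈ N := hx₀U
      rw [h] at this
      simpa using this
    · intro x
      have : x ∈ N := by rw [h]; trivial
      exact this
  -- operator relations
  have hE2 : ρ (Egen (-1)) * ρ (Egen (-1)) = 0 := by rw [← map_mul, Egen_sq, map_zero]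
  have hF2 : ρ (Fgen (-1)) * ρ (Fgen (-1)) = 0 := by rw [← map_mul, Fgen_sq, map_zero]
  have hPE : ρ (Pgen (-1)) * ρ (Egen (-1)) = -(ρ (Egen (-1)) * ρ (Pgen (-1))) := by
    rw [← map_mul, PE_anticomm, map_neg, map_mul]
  have hPF : ρ (Pgen (-1)) * ρ (Fgen (-1)) = -(ρ (Fgen (-1)) * ρ (Pgen (-1))) := by
    rw [← map_mul, PF_anticomm, map_neg, map_mul]
  have hEF : ρ (Egen (-1)) * ρ (Fgen (-1)) - ρ (Fgen (-1)) * ρ (Egen (-1)) = ρ (Pgen (-1)) := by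
    rw [← map_mul, ← map_mul, ← map_sub, EF_comm]
  -- Step 1: Ψ acts as zero
  have hP0 : ∀ x : W, ρ (Pgen (-1)) x = 0 := by
    have h := step (LinearMap.ker (ρ (Pgen (-1))))
      (fun x hx => by
        simp only [LinearMap.mem_ker] at hx ⊢
        have := congrFun (congrArg (DFunLike.coe) hPE) x
        simp only [Module.End.mul_apply, LinearMap.neg_apply] at this
        rw [this, hx, map_zero, neg_zero])
      (fun x hx => by
        simp only [LinearMap.mem_ker] at hx ⊢
        have := congrFun (congrArg (DFunLike.coe) hPF) x
        simp only [Module.End.mul_apply, LinearMap.neg_apply] at this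
        rw [this, hx, map_zero, neg_zero])
      (fun x hx => by
        simp only [LinearMap.mem_ker] at hx ⊢
        rw [hx, map_zero])
      w₀ hw₀ (by simpa [LinearMap.mem_ker, hρ_apply] using hPw₀)
    intro x
    exact h x
  have hPzero : ρ (Pgen (-1)) = 0 := LinearMap.ext hP0
  have hEFc : ρ (Egen (-1)) * ρ (Fgen (-1)) = ρ (Fgen (-1)) * ρ (Egen (-1)) := by
    have h := hEF
    rw [hPzero] at h
    exact sub_eq_zero.mp h
  -- Step 2: a kernel-of-nilpotent argument for E and F
  have genzero : ∀ T : Module.End ℂ W,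
      (∀ x : W, T (ρ (Egen (-1)) x) = ρ (Egen (-1)) (T x)) →
      (∀ x : W, T (ρ (Fgen (-1)) x) = ρ (Fgen (-1)) (T x)) →
      T * T = 0 → ∀ x : W, T x = 0 := by
    intro T hTE hTF hT2 x
    obtain ⟨u, hu⟩ := exists_ne (0 : W)
    have hT2' : ∀ y : W, T (T y) = 0 := by
      intro y
      have := congrFun (congrArg (DFunLike.coe) hT2) y
      simpa [Module.End.mul_apply] using this
    have hbase : ∃ v : W, v ≠ 0 ∧ T v = 0 := by
      by_cases h : T u = 0
      · exact ⟨u, hu, h⟩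
      · exact ⟨T u, h, hT2' u⟩
    obtain ⟨v, hv, hTv⟩ := hbase
    have h := step (LinearMap.ker T)
      ((mem_presAlg _ _).2 (fun y hy => by
        simp only [LinearMap.mem_ker] at hy ⊢
        rw [hTE, hy, map_zero]))
      ((mem_presAlg _ _).2 (fun y hy => by
        simp only [LinearMap.mem_ker] at hy ⊢
        rw [hTF, hy, map_zero]))
      ((mem_presAlg _ _).2 (fun y hy => by
        simp only [LinearMap.mem_ker]
        rw [hP0 y, map_zero]))
      v hv (by simpa [LinearMap.mem_ker] using hTv)
    exact h x
  have hE0 : ∀ x : W, ρ (Egen (-1)) x = 0 := by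
    refine genzero _ (fun x => ?_) (fun x => ?_) hE2
    · rfl
    · have := congrFun (congrArg (DFunLike.coe) hEFc) x
      simpa [Module.End.mul_apply] using this
  have hF0 : ∀ x : W, ρ (Fgen (-1)) x = 0 := by
    refine genzero _ (fun x => ?_) (fun x => ?_) hF2
    · have := congrFun (congrArg (DFunLike.coe) hEFc) x
      simpa [Module.End.mul_apply] using this.symm
    · rfl
  -- Step 3: one-dimensionality
  have hspan : ∀ x : W, x ∈ Submodule.span ℂ {w₀} := by
    refine step (Submodule.span ℂ {w₀})
      ((mem_presAlg _ _).2 (fun y _ => by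
        rw [hE0 y]; exact Submodule.zero_mem _))
      ((mem_presAlg _ _).2 (fun y _ => by
        rw [hF0 y]; exact Submodule.zero_mem _))
      ((mem_presAlg _ _).2 (fun y _ => by
        rw [hP0 y]; exact Submodule.zero_mem _))
      w₀ hw₀ (Submodule.mem_span_singleton_self w₀)
  constructor
  · intro x
    refine ⟨?_, ?_, ?_⟩
    · rw [← hρ_apply]; exact hP0 x
    · rw [← hρ_apply]; exact hE0 x
    · rw [← hρ_apply]; exact hF0 x
  · refine finrank_eq_one w₀ hw₀ (fun v => ?_)
    exact Submodule.mem_span_singleton.mp (hspan v)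
end
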